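/- In the quotient ring R = ℤ[u₀,u₁,u₂,u₃]/I₆ where I₆ = (u₀u₁u₂u₃ − 1, (u₀⁶−1)/(u₀−1), ..., (u₃⁶−1)/(u₃−1)), the tensor product R ⊗ ℚ is a finite-dimensional ℚ-vector space of dimension 105. -/

import Mathlib

open MvPolynomial TensorProduct

/-- The ideal `I₆ = (u₀u₁u₂u₃ − 1, 1+u₀+⋯+u₀⁵, …, 1+u₃+⋯+u₃⁵)` in
`ℤ[u₀,u₁,u₂,u₃]`. -/
noncomputable def fermatIdeal6 : Ideal (MvPolynomial (Fin 4) ℤ) :=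
  Ideal.span ({X 0 * X 1 * X 2 * X 3 - 1} ∪
    Set.range fun i : Fin 4 => ∑ j ∈ Finset.range 6, (X i) ^ j)

/-!
Base change identifies `ℚ ⊗ ℤ[u]/I₆` with `ℚ[u]/I₆`. Write `Φ = 1 + X + ⋯ + X⁵`,
`Tₖ = ℚ[x₁, …, xₖ]/(Φ(x₁), …, Φ(xₖ))` (so `dim Tₖ = 5ᵏ`) and `vₖ = x₁ ⋯ xₖ ∈ Tₖ`; then
`ℚ[u]/I₆ ≅ T₄/(v₄ - 1)`. In `Tₖ₊₁/(vₖ xₖ₊₁ - 1)` the new root is `vₖ⁻¹`, so this quotient is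
`Tₖ/Φ(vₖ⁻¹)`. Since `(v - 1) Φ(v) = v⁶ - 1 = 0` and `Φ(1) = 6` is a unit, the Chinese remainder
theorem splits `Tₖ ≅ Tₖ/(vₖ⁻¹ - 1) × Tₖ/Φ(vₖ⁻¹)`, and `(vₖ⁻¹ - 1) = (vₖ - 1)`. Hence
`bₖ = dim Tₖ/(vₖ - 1)` satisfies `bₖ₊₁ + bₖ = 5ᵏ` with `b₁ = 0`, and `b₄ = 125 - 25 + 5 = 105`.
The argument works verbatim for any `n` invertible in the base field in place of `6`.
-/

open Finset Module

noncomputable def geomSumX (A : Type*) [CommRing A] (n : ℕ) : Polynomial A :=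
  ∑ i ∈ range n, Polynomial.X ^ i

section GeomSumX

variable {A : Type*} [CommRing A] {n : ℕ}

theorem geomSumX_monic (hn : n ≠ 0) : (geomSumX A n).Monic :=
  Polynomial.monic_geom_sum_X hn

theorem natDegree_geomSumX [Nontrivial A] (hn : n ≠ 0) : (geomSumX A n).natDegree = n - 1 := by
  have h := (geomSumX_monic (A := A) hn).natDegree_mul (Polynomial.monic_X_sub_C 1)
  rw [Polynomial.C_1, geomSumX, geom_sum_mul, ← Polynomial.C_1, Polynomial.natDegree_X_pow_sub_C,
    Polynomial.natDegree_X_sub_C] at h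
  rw [geomSumX]
  omega

@[simp]
theorem eval₂_geomSumX {B : Type*} [CommRing B] (f : A →+* B) (x : B) :
    (geomSumX A n).eval₂ f x = ∑ i ∈ range n, x ^ i := by
  simp [geomSumX, Polynomial.eval₂_finsetSum]

@[simp]
theorem eval_geomSumX (x : A) : (geomSumX A n).eval x = ∑ i ∈ range n, x ^ i := by
  simp [geomSumX, Polynomial.eval_finsetSum]

theorem AdjoinRoot.geom_sum_root : ∑ i ∈ range n, root (geomSumX A n) ^ i = 0 := by
  simpa using eval₂_root (geomSumX A n)

theorem AdjoinRoot.of_mul_root_pow_eq_one {w : A} (hw : w ^ n = 1) :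
    (of (geomSumX A n) w * root (geomSumX A n)) ^ n = 1 := by
  rw [mul_pow, ← map_pow, hw, map_one, one_mul, ← sub_eq_zero, ← geom_sum_mul, geom_sum_root,
    zero_mul]

theorem isCoprime_sub_one_geom_sum (hn : IsUnit (n : A)) (v : A) :
    IsCoprime (v - 1) (∑ i ∈ range n, v ^ i) := by
  obtain ⟨q, hq⟩ := Polynomial.sub_dvd_eval_sub v 1 (geomSumX A n)
  simp only [eval_geomSumX, one_pow, sum_const, card_range, nsmul_one] at hq
  obtain ⟨b, hb⟩ := hn.exists_left_inv
  exact ⟨-(b * q), b, by linear_combination b * hq + hb⟩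

end GeomSumX

namespace AdjoinRoot

variable {A : Type*} [CommRing A] (f : Polynomial A) (w : Aˣ)

theorem mk_root_eq_mk_of_inv :
    Ideal.Quotient.mk (Ideal.span {of f ↑w * root f - 1}) (root f) =
      Ideal.Quotient.mk (Ideal.span {of f ↑w * root f - 1}) (of f ↑w⁻¹) := by
  have hw : of f ↑w * of f ↑w⁻¹ = 1 := by rw [← map_mul, Units.mul_inv, map_one]
  rw [Ideal.Quotient.mk_eq_mk_iff_sub_mem, Ideal.mem_span_singleton']
  exact ⟨of f ↑w⁻¹, by linear_combination root f * hw⟩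

noncomputable def quotientMulRootSubOneAlgEquiv :
    (AdjoinRoot f ⧸ Ideal.span {of f ↑w * root f - 1}) ≃ₐ[A] A ⧸ Ideal.span {f.eval ↑w⁻¹} :=
  AlgEquiv.ofAlgHom
    (Ideal.Quotient.liftₐ _
      (liftAlgHom f (Algebra.ofId A _) (Ideal.Quotient.mk _ ↑w⁻¹) (by
        rw [Algebra.toRingHom_ofId, Ideal.Quotient.algebraMap_eq, Polynomial.eval₂_hom,
          Ideal.Quotient.eq_zero_iff_mem]
        exact Ideal.mem_span_singleton_self _))
      (fun a ha => RingHom.mem_ker.1 <| by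
        refine (Ideal.span_singleton_le_iff_mem _).2 ?_ ha
        simp only [RingHom.mem_ker, map_sub, map_mul, map_one, liftAlgHom_of, liftAlgHom_root,
          Algebra.ofId_apply, Ideal.Quotient.algebraMap_eq]
        rw [← map_mul, Units.mul_inv, map_one, sub_self]))
    (Ideal.Quotient.liftₐ _ (Algebra.ofId A _) (fun a ha => RingHom.mem_ker.1 <| by
      refine (Ideal.span_singleton_le_iff_mem _).2 ?_ ha
      rw [RingHom.mem_ker, Algebra.ofId_apply, IsScalarTower.algebraMap_apply A (AdjoinRoot f),
        Ideal.Quotient.algebraMap_eq, algebraMap_eq, ← RingHom.comp_apply,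
        ← Polynomial.eval₂_hom, RingHom.comp_apply, ← mk_root_eq_mk_of_inv,
        ← Polynomial.hom_eval₂, eval₂_root, map_zero]))
    (Ideal.Quotient.algHom_ext _ (Subsingleton.elim _ _))
    (Ideal.Quotient.algHom_ext _ (algHom_ext (by simp [mk_root_eq_mk_of_inv]; rfl)))

end AdjoinRoot

section Finrank

variable (K : Type*) {A : Type*} [Field K] [CommRing A] [Algebra K A] [Module.Finite K A]
  {n : ℕ}

theorem finite_adjoinRoot_of_monic {f : Polynomial A} (hf : f.Monic) :
    Module.Finite K (AdjoinRoot f) :=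
  Module.Finite.of_basis ((Free.chooseBasis K A).smulTower (AdjoinRoot.powerBasis' hf).basis)

theorem finrank_adjoinRoot_of_monic {f : Polynomial A} (hf : f.Monic) :
    finrank K (AdjoinRoot f) = finrank K A * f.natDegree := by
  rw [finrank_eq_card_basis ((Free.chooseBasis K A).smulTower (AdjoinRoot.powerBasis' hf).basis)]
  simp [finrank_eq_card_chooseBasisIndex]

theorem finrank_adjoinRoot_geomSumX (hn : n ≠ 0) :
    finrank K (AdjoinRoot (geomSumX A n)) = finrank K A * (n - 1) := by
  rcases subsingleton_or_nontrivial A with hA | hA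
  · have : Subsingleton (AdjoinRoot (geomSumX A n)) := AdjoinRoot.mk_surjective.subsingleton
    simp [finrank_zero_of_subsingleton]
  · rw [finrank_adjoinRoot_of_monic K (geomSumX_monic hn), natDegree_geomSumX hn]

theorem finrank_quotient_sub_one_add_finrank_quotient_geom_sum (hn : (n : K) ≠ 0) {v : A}
    (hv : v ^ n = 1) :
    finrank K (A ⧸ Ideal.span {v - 1}) + finrank K (A ⧸ Ideal.span {∑ i ∈ range n, v ^ i}) =
      finrank K A := by
  have hunit : IsUnit (n : A) := by
    simpa using hn.isUnit.map (algebraMap K A)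
  have hmul : Ideal.span {v - 1} * Ideal.span {∑ i ∈ range n, v ^ i} = ⊥ := by
    rw [Ideal.span_singleton_mul_span_singleton, mul_geom_sum, hv, sub_self,
      Ideal.span_singleton_eq_bot]
  let e : A ≃ₐ[K] (A ⧸ Ideal.span {v - 1}) × (A ⧸ Ideal.span {∑ i ∈ range n, v ^ i}) :=
    AlgEquiv.ofRingEquiv (f := (RingEquiv.quotientBot A).symm.trans <|
      (Ideal.quotEquivOfEq hmul.symm).trans <| Ideal.quotientMulEquivQuotientProd _ _ <|
        (Ideal.isCoprime_span_singleton_iff _ _).2 (isCoprime_sub_one_geom_sum hunit v))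
      (fun _ => rfl)
  rw [e.toLinearEquiv.finrank_eq, finrank_prod]

theorem finrank_quotient_mul_root_sub_one_add_finrank_quotient_sub_one (hn : (n : K) ≠ 0)
    {w : A} (hw : w ^ n = 1) :
    finrank K (AdjoinRoot (geomSumX A n) ⧸
        Ideal.span {AdjoinRoot.of _ w * AdjoinRoot.root _ - 1}) +
      finrank K (A ⧸ Ideal.span {w - 1}) = finrank K A := by
  have hn0 : n ≠ 0 := by rintro rfl; simp at hn
  obtain ⟨u, rfl⟩ := IsUnit.of_pow_eq_one hw hn0
  have hu : (↑u⁻¹ : A) ^ n = 1 := by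
    have hu' : u ^ n = 1 := Units.val_eq_one.1 (by rw [Units.val_pow_eq_pow_val, hw])
    rw [← Units.val_pow_eq_pow_val, inv_pow, hu', inv_one, Units.val_one]
  have hspan : Ideal.span {(↑u⁻¹ : A) - 1} = Ideal.span {(↑u : A) - 1} := by
    rw [← Ideal.span_singleton_mul_left_unit (-u⁻¹).isUnit ((↑u : A) - 1), Units.val_neg,
      neg_mul, mul_sub, Units.inv_mul, mul_one, neg_sub]
  rw [((AdjoinRoot.quotientMulRootSubOneAlgEquiv (geomSumX A n) u).restrictScalars
    K).toLinearEquiv.finrank_eq, eval_geomSumX, ← hspan, add_comm]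
  exact finrank_quotient_sub_one_add_finrank_quotient_geom_sum K hn hu

end Finrank

noncomputable def MvPolynomial.tensorQuotientEquiv (R A : Type*) {σ : Type*} [CommRing R]
    [CommRing A] [Algebra R A] (I : Ideal (MvPolynomial σ R)) :
    A ⊗[R] (MvPolynomial σ R ⧸ I) ≃ₐ[A]
      MvPolynomial σ A ⧸ I.map (MvPolynomial.map (algebraMap R A)) :=
  (Algebra.TensorProduct.tensorQuotientEquiv A (MvPolynomial σ R) A I).trans <|
    Ideal.quotientEquivAlg _ _ (algebraTensorAlgEquiv R A) <| by
      rw [← Ideal.map_coe Algebra.TensorProduct.includeRight, Ideal.map_map]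
      congr 1
      ext <;> simp

noncomputable def fermatIdeal (R : Type*) [CommRing R] (n : ℕ) :
    Ideal (MvPolynomial (Fin 4) R) :=
  Ideal.span ({X 0 * X 1 * X 2 * X 3 - 1} ∪
    Set.range fun i : Fin 4 => ∑ j ∈ range n, (X i) ^ j)

section FermatIdeal

variable {R : Type*} [CommRing R] {n : ℕ}

theorem fermatIdeal_map {S : Type*} [CommRing S] (f : R →+* S) :
    (fermatIdeal R n).map (MvPolynomial.map f) = fermatIdeal S n := by
  simp [fermatIdeal, Ideal.map_span, Set.image_insert_eq, ← Set.range_comp, Function.comp_def]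

theorem prod_mk_X_fermatIdeal : ∏ i, Ideal.Quotient.mk (fermatIdeal R n) (X i) = 1 := by
  rw [← map_prod, ← sub_eq_zero, ← map_one (Ideal.Quotient.mk _), ← map_sub,
    Ideal.Quotient.eq_zero_iff_mem]
  exact Ideal.subset_span (Or.inl (by simp [Fin.prod_univ_four]))

theorem geom_sum_mk_X_fermatIdeal (i : Fin 4) :
    ∑ j ∈ range n, Ideal.Quotient.mk (fermatIdeal R n) (X i) ^ j = 0 := by
  simp_rw [← map_pow, ← map_sum, Ideal.Quotient.eq_zero_iff_mem]
  exact Ideal.subset_span (Or.inr ⟨i, rfl⟩)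

end FermatIdeal

namespace Fermat

variable (R : Type*) [CommRing R] (n : ℕ)

abbrev Tower₁ := AdjoinRoot (geomSumX R n)
abbrev Tower₂ := AdjoinRoot (geomSumX (Tower₁ R n) n)
abbrev Tower₃ := AdjoinRoot (geomSumX (Tower₂ R n) n)
abbrev Tower₄ := AdjoinRoot (geomSumX (Tower₃ R n) n)

noncomputable def towerProd₁ : Tower₁ R n := AdjoinRoot.root _
noncomputable def towerProd₂ : Tower₂ R n := AdjoinRoot.of _ (towerProd₁ R n) * AdjoinRoot.root _
noncomputable def towerProd₃ : Tower₃ R n := AdjoinRoot.of _ (towerProd₂ R n) * AdjoinRoot.root _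
noncomputable def towerProd₄ : Tower₄ R n := AdjoinRoot.of _ (towerProd₃ R n) * AdjoinRoot.root _

noncomputable def towerRoot : Fin 4 → Tower₄ R n :=
  ![AdjoinRoot.of _ (AdjoinRoot.of _ (AdjoinRoot.of _ (AdjoinRoot.root _))),
    AdjoinRoot.of _ (AdjoinRoot.of _ (AdjoinRoot.root _)), AdjoinRoot.of _ (AdjoinRoot.root _),
    AdjoinRoot.root _]

theorem towerProd₄_eq_prod : towerProd₄ R n = ∏ i, towerRoot R n i := by
  simp [towerProd₄, towerProd₃, towerProd₂, towerProd₁, towerRoot, Fin.prod_univ_four, mul_assoc]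

theorem geom_sum_towerRoot (i : Fin 4) : ∑ j ∈ range n, towerRoot R n i ^ j = 0 := by
  fin_cases i <;> simp [towerRoot, ← map_pow, ← map_sum, AdjoinRoot.geom_sum_root]

noncomputable def quotientToTower :
    MvPolynomial (Fin 4) R ⧸ fermatIdeal R n →ₐ[R] Tower₄ R n ⧸ Ideal.span {towerProd₄ R n - 1} :=
  Ideal.Quotient.liftₐ _ (aeval fun i => Ideal.Quotient.mk _ (towerRoot R n i)) fun a ha => by
    refine RingHom.mem_ker.1 ((Ideal.span_le.2 ?_) ha)
    rintro _ (rfl | ⟨i, rfl⟩)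
    · simp only [SetLike.mem_coe, RingHom.mem_ker, map_sub, map_mul, map_one, aeval_X]
      rw [← map_mul, ← map_mul, ← map_mul, ← map_one (Ideal.Quotient.mk _), ← map_sub,
        Ideal.Quotient.eq_zero_iff_mem, ← Fin.prod_univ_four, ← towerProd₄_eq_prod]
      exact Ideal.mem_span_singleton_self _
    · simp only [SetLike.mem_coe, RingHom.mem_ker, map_sum, map_pow, aeval_X]
      simp_rw [← map_pow, ← map_sum, geom_sum_towerRoot, map_zero]

theorem quotientToTower_mk_X (i : Fin 4) :
    quotientToTower R n (Ideal.Quotient.mk _ (X i)) = Ideal.Quotient.mk _ (towerRoot R n i) :=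
  aeval_X _ i

noncomputable def towerToQuotient : Tower₄ R n →ₐ[R] MvPolynomial (Fin 4) R ⧸ fermatIdeal R n :=
  let x i := Ideal.Quotient.mk (fermatIdeal R n) (X i)
  have hx (i) {A : Type _} [CommRing A] (f : A →+* _) : (geomSumX A n).eval₂ f (x i) = 0 := by
    rw [eval₂_geomSumX]
    exact geom_sum_mk_X_fermatIdeal i
  AdjoinRoot.liftAlgHom _ (AdjoinRoot.liftAlgHom _ (AdjoinRoot.liftAlgHom _
    (AdjoinRoot.liftAlgHom _ (Algebra.ofId R _) (x 0) (hx 0 _)) (x 1) (hx 1 _)) (x 2) (hx 2 _))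
    (x 3) (hx 3 _)

theorem towerToQuotient_towerRoot (i : Fin 4) :
    towerToQuotient R n (towerRoot R n i) = Ideal.Quotient.mk _ (X i) := by
  fin_cases i <;> simp [towerToQuotient, towerRoot]

noncomputable def quotientEquivTower :
    (MvPolynomial (Fin 4) R ⧸ fermatIdeal R n) ≃ₐ[R]
      Tower₄ R n ⧸ Ideal.span {towerProd₄ R n - 1} :=
  AlgEquiv.ofAlgHom (quotientToTower R n)
    (Ideal.Quotient.liftₐ _ (towerToQuotient R n) fun a ha => by
      refine RingHom.mem_ker.1 ((Ideal.span_singleton_le_iff_mem _).2 ?_ ha)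
      rw [RingHom.mem_ker, map_sub, map_one, towerProd₄_eq_prod, map_prod]
      simp_rw [towerToQuotient_towerRoot, prod_mk_X_fermatIdeal, sub_self])
    (by
      apply Ideal.Quotient.algHom_ext
      ext <;> simp [towerToQuotient, quotientToTower_mk_X, towerRoot])
    (by
      refine Ideal.Quotient.algHom_ext _ (MvPolynomial.algHom_ext fun i => ?_)
      simp only [AlgHom.comp_apply, AlgHom.id_apply, Ideal.Quotient.mkₐ_eq_mk,
        quotientToTower_mk_X]
      exact towerToQuotient_towerRoot R n i)

end Fermat

open Fermat in
theorem finrank_quotient_fermatIdeal (K : Type*) [Field K] {n : ℕ} (hn : (n : K) ≠ 0) :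
    finrank K (MvPolynomial (Fin 4) K ⧸ fermatIdeal K n) + (n - 1) ^ 2 =
      (n - 1) ^ 3 + (n - 1) := by
  have hn0 : n ≠ 0 := by rintro rfl; simp at hn
  have : Module.Finite K (Tower₁ K n) := finite_adjoinRoot_of_monic K (geomSumX_monic hn0)
  have : Module.Finite K (Tower₂ K n) := finite_adjoinRoot_of_monic K (geomSumX_monic hn0)
  have : Module.Finite K (Tower₃ K n) := finite_adjoinRoot_of_monic K (geomSumX_monic hn0)
  have hw₁ : towerProd₁ K n ^ n = 1 := by
    simpa [towerProd₁] using AdjoinRoot.of_mul_root_pow_eq_one (A := K) (one_pow n)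
  have hw₂ : towerProd₂ K n ^ n = 1 := AdjoinRoot.of_mul_root_pow_eq_one hw₁
  have hw₃ : towerProd₃ K n ^ n = 1 := AdjoinRoot.of_mul_root_pow_eq_one hw₂
  have h₁ : finrank K (Tower₁ K n ⧸ Ideal.span {towerProd₁ K n - 1}) = 0 := by
    have h :=
      finrank_quotient_mul_root_sub_one_add_finrank_quotient_sub_one K hn (one_pow (M := K) n)
    rw [map_one, one_mul, sub_self, Ideal.span_singleton_eq_bot.2 rfl,
      (AlgEquiv.quotientBot K K).toLinearEquiv.finrank_eq, finrank_self] at h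
    exact Nat.add_right_cancel (m := 1) h
  have h₂ : finrank K (Tower₂ K n ⧸ Ideal.span {towerProd₂ K n - 1}) +
      finrank K (Tower₁ K n ⧸ Ideal.span {towerProd₁ K n - 1}) = finrank K (Tower₁ K n) :=
    finrank_quotient_mul_root_sub_one_add_finrank_quotient_sub_one K hn hw₁
  have h₃ : finrank K (Tower₃ K n ⧸ Ideal.span {towerProd₃ K n - 1}) +
      finrank K (Tower₂ K n ⧸ Ideal.span {towerProd₂ K n - 1}) = finrank K (Tower₂ K n) :=
    finrank_quotient_mul_root_sub_one_add_finrank_quotient_sub_one K hn hw₂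
  have h₄ : finrank K (Tower₄ K n ⧸ Ideal.span {towerProd₄ K n - 1}) +
      finrank K (Tower₃ K n ⧸ Ideal.span {towerProd₃ K n - 1}) = finrank K (Tower₃ K n) :=
    finrank_quotient_mul_root_sub_one_add_finrank_quotient_sub_one K hn hw₃
  simp only [finrank_adjoinRoot_geomSumX K hn0, finrank_self, one_mul] at h₂ h₃ h₄
  rw [(quotientEquivTower K n).toLinearEquiv.finrank_eq]
  linarith

/-- `R ⊗ ℚ` is a 105-dimensional ℚ-vector space, for
`R = ℤ[u₀,u₁,u₂,u₃]/I₆`. -/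
theorem stmt_12 :
    FiniteDimensional ℚ (ℚ ⊗[ℤ] (MvPolynomial (Fin 4) ℤ ⧸ fermatIdeal6)) ∧
    Module.finrank ℚ (ℚ ⊗[ℤ] (MvPolynomial (Fin 4) ℤ ⧸ fermatIdeal6)) = 105 := by
  let e : ℚ ⊗[ℤ] (MvPolynomial (Fin 4) ℤ ⧸ fermatIdeal6) ≃ₐ[ℚ]
      MvPolynomial (Fin 4) ℚ ⧸ fermatIdeal ℚ 6 :=
    (MvPolynomial.tensorQuotientEquiv ℤ ℚ (fermatIdeal ℤ 6)).trans
      (Ideal.quotientEquivAlgOfEq ℚ (fermatIdeal_map _))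
  have hdim : finrank ℚ (ℚ ⊗[ℤ] (MvPolynomial (Fin 4) ℤ ⧸ fermatIdeal6)) = 105 := by
    have h := finrank_quotient_fermatIdeal ℚ (n := 6) (by norm_num)
    rw [e.toLinearEquiv.finrank_eq]
    omega
  exact ⟨Module.finite_of_finrank_pos (by omega), hdim⟩
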